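/- Let p be a prime and let n ≥ k ≥ 2 be integers. Then Φ(n,k,p) ≤ μ_p·(n−k+1−⌊(n−k+1)/(p+1)⌋); that is, every linear code of length n and dimension k over ℤ_p has minimum Lee distance at most μ_p·(n−k+1−⌊(n−k+1)/(p+1)⌋). -/

import Mathlib

/-- Lee weight of an element of `ZMod q`. -/
noncomputable def leeWt {q : ℕ} (a : ZMod q) : ℕ := min (ZMod.val a) (q - ZMod.val a)

/-- Lee weight of a vector over `ZMod q`. -/
noncomputable def leeWtVec {q n : ℕ} (x : Fin n → ZMod q) : ℕ := ∑ i, leeWt (x i)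

/-- Minimum Lee distance (= minimum Lee weight of a nonzero codeword) of a linear code. -/
noncomputable def minLee {q n : ℕ} (C : Submodule (ZMod q) (Fin n → ZMod q)) : ℕ :=
  sInf {w | ∃ x ∈ C, x ≠ 0 ∧ leeWtVec x = w}

/-- Minimum Hamming distance (= minimum Hamming weight of a nonzero codeword). -/
noncomputable def minHam {q n : ℕ} (C : Submodule (ZMod q) (Fin n → ZMod q)) : ℕ :=
  sInf {w | ∃ x ∈ C, x ≠ 0 ∧ hammingNorm x = w}

/-- Average nonzero Lee weight of `ZMod q`. -/
noncomputable def mu (q : ℕ) : ℚ :=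
  if Even q then (q : ℚ)^2 / (4 * ((q : ℚ) - 1)) else ((q : ℚ) + 1) / 4

/-- `Phi n k p`: the maximum minimum Lee distance over `k`-dimensional linear codes
of length `n` over `ZMod p`. -/
noncomputable def Phi (n k p : ℕ) : ℕ :=
  sSup {d | ∃ C : Submodule (ZMod p) (Fin n → ZMod p),
    Module.finrank (ZMod p) ↥C = k ∧ minLee C = d}

/-- Rank of a linear code over `ZMod q`: minimal number of generators. -/
noncomputable def codeRank {q n : ℕ} (C : Submodule (ZMod q) (Fin n → ZMod q)) : ℕ :=
  sInf {m | ∃ s : Finset (Fin n → ZMod q), s.card = m ∧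
    Submodule.span (ZMod q) (↑s : Set (Fin n → ZMod q)) = C}

/-- `PhiR n K q`: the maximum minimum Lee distance over rank-`K` linear codes of
length `n` over `ZMod q`. -/
noncomputable def PhiR (n K q : ℕ) : ℕ :=
  sSup {d | ∃ C : Submodule (ZMod q) (Fin n → ZMod q), codeRank C = K ∧ minLee C = d}

/-!
Fix `k - 2` coordinates. The codewords vanishing there form a subspace of dimension at least `2`;
pick independent `u, v` in it. On each of the remaining `n - k + 2` coordinates the pair
`(u i, v i)` determines one of the `p + 1` points of the projective line, so some point is hit
more than `⌊(n - k + 1) / (p + 1)⌋` times, and the combination of `u, v` vanishing at that point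
is a nonzero codeword of Hamming weight at most `n - k + 1 - ⌊(n - k + 1) / (p + 1)⌋`.
Scaling a codeword by the `p - 1` nonzero scalars runs each nonzero coordinate through all of
`ℤ_p \ {0}`, so the average Lee weight of these multiples is `μ_p` times the Hamming weight.
-/

open Finset Module

section FiniteField

variable {K ι : Type*} [Field K]

theorem exists_linearIndependent_pair_vanishing_on [Fintype ι] (C : Submodule K (ι → K))
    (T : Finset ι) (hT : #T + 2 ≤ finrank K C) :
    ∃ u ∈ C, ∃ v ∈ C, LinearIndependent K ![u, v] ∧ ∀ i ∈ T, u i = 0 ∧ v i = 0 := by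
  let restrict : C →ₗ[K] (T → K) := (LinearMap.funLeft K K Subtype.val).comp C.subtype
  have hker : 1 < finrank K (LinearMap.ker restrict) := by
    have hrange : finrank K (LinearMap.range restrict) ≤ #T := by
      simpa using Submodule.finrank_le (LinearMap.range restrict)
    have := LinearMap.finrank_range_add_finrank_ker restrict
    omega
  have : Nontrivial (LinearMap.ker restrict) :=
    Module.nontrivial_of_finrank_pos (R := K) (by omega)
  obtain ⟨u, hu⟩ := exists_ne (0 : LinearMap.ker restrict)
  obtain ⟨v, huv⟩ :=
    exists_linearIndependent_pair_of_one_lt_finrank (R := K) (M := LinearMap.ker restrict) hker hu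
  have hvanish (w : LinearMap.ker restrict) (i : ι) (hi : i ∈ T) : (w : ι → K) i = 0 :=
    congrFun (LinearMap.mem_ker.mp w.2) ⟨i, hi⟩
  refine ⟨u, (u : C).2, v, (v : C).2, ?_, fun i hi => ⟨hvanish u i hi, hvanish v i hi⟩⟩
  refine LinearIndependent.pair_iff.mpr fun s t hst => LinearIndependent.pair_iff.mp huv s t ?_
  exact Subtype.ext (Subtype.ext hst)

theorem exists_combination_vanishing_on_many [Fintype K] [DecidableEq K] (u v : ι → K)
    (S : Finset ι) {m : ℕ} (hS : (Fintype.card K + 1) * m < #S) :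
    ∃ a b : K, ¬(a = 0 ∧ b = 0) ∧ m < #{i ∈ S | a * u i + b * v i = 0} := by
  -- `slope i` is the point `(u i : v i)` of the projective line over `K`
  let slope : ι → Option K := fun i => if u i = 0 then none else some (v i / u i)
  obtain ⟨c, -, hc⟩ := exists_lt_card_fiber_of_mul_lt_card_of_maps_to
    (f := slope) (t := univ) (fun _ _ => mem_univ _) (by simpa using hS)
  rcases c with _ | t
  · refine ⟨1, 0, by simp, hc.trans_le (card_le_card fun i hi => ?_)⟩
    obtain ⟨hiS, hslope⟩ := mem_filter.mp hi
    have hu : u i = 0 := by by_contra hu; simp [slope, hu] at hslope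
    exact mem_filter.mpr ⟨hiS, by simp [hu]⟩
  · refine ⟨t, -1, by simp, hc.trans_le (card_le_card fun i hi => ?_)⟩
    obtain ⟨hiS, hslope⟩ := mem_filter.mp hi
    have hu : u i ≠ 0 := by intro hu; simp [slope, hu] at hslope
    have ht : v i / u i = t := by simpa [slope, hu] using hslope
    exact mem_filter.mpr ⟨hiS, by rw [← ht]; field_simp; ring⟩

theorem exists_ne_zero_hammingNorm_le [Fintype K] [DecidableEq K] [Fintype ι]
    (C : Submodule K (ι → K)) (hC : 2 ≤ finrank K C) :
    ∃ x ∈ C, x ≠ 0 ∧ hammingNorm x ≤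
      Fintype.card ι - finrank K C + 1 -
        (Fintype.card ι - finrank K C + 1) / (Fintype.card K + 1) := by
  classical
  set N := Fintype.card ι - finrank K C + 1
  have hCn : finrank K C ≤ Fintype.card ι := by simpa using Submodule.finrank_le C
  obtain ⟨T, -, hT⟩ := exists_subset_card_eq (s := (univ : Finset ι)) (n := finrank K C - 2)
    (by rw [card_univ]; omega)
  obtain ⟨u, hu, v, hv, huv, hvanish⟩ :=
    exists_linearIndependent_pair_vanishing_on C T (by omega)
  have hTc : #Tᶜ = N + 1 := by rw [card_compl, hT]; omega
  obtain ⟨a, b, hab, hR⟩ := exists_combination_vanishing_on_many u v Tᶜ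
    (m := N / (Fintype.card K + 1)) (by have := Nat.mul_div_le N (Fintype.card K + 1); omega)
  refine ⟨a • u + b • v, C.add_mem (C.smul_mem a hu) (C.smul_mem b hv),
    fun h => hab (LinearIndependent.pair_iff.mp huv a b h), ?_⟩
  have hsupp : hammingNorm (a • u + b • v) = #{i ∈ Tᶜ | ¬(a * u i + b * v i = 0)} := by
    unfold hammingNorm
    congr 1
    ext i
    simp only [mem_filter, mem_univ, true_and, mem_compl, Pi.add_apply, Pi.smul_apply,
      smul_eq_mul]
    refine ⟨fun h => ⟨fun hi => h ?_, h⟩, And.right⟩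
    simp [(hvanish i hi).1, (hvanish i hi).2]
  have := card_filter_add_card_filter_not (s := Tᶜ) (fun i => a * u i + b * v i = 0)
  omega

end FiniteField

theorem four_mul_sum_range_min_sub_add_mod_two (q : ℕ) :
    4 * ∑ j ∈ range q, min j (q - j) + q % 2 = q ^ 2 := by
  induction q using Nat.twoStepInduction with
  | zero => simp
  | one => simp
  | more q ih _ =>
    have hshift : ∑ j ∈ range (q + 1), min (j + 1) (q + 2 - (j + 1))
        = ∑ j ∈ range (q + 1), (min j (q - j) + 1) :=
      sum_congr rfl fun j hj => by have := mem_range.mp hj; omega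
    rw [sum_range_succ', hshift, sum_add_distrib, sum_range_succ]
    simp only [Nat.sub_self, _root_.min_zero, add_zero, sum_const, card_range, smul_eq_mul,
      mul_one, zero_min]
    have : (q + 2) % 2 = q % 2 := by omega
    rw [this]
    nlinarith [ih]

theorem sum_leeWt_eq_sum_range_min (q : ℕ) [NeZero q] :
    ∑ a : ZMod q, leeWt a = ∑ j ∈ range q, min j (q - j) := by
  obtain ⟨m, rfl⟩ := Nat.exists_eq_succ_of_ne_zero (NeZero.ne q)
  exact Fin.sum_univ_eq_sum_range (fun j => min j (m + 1 - j)) (m + 1)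

theorem mu_nonneg (q : ℕ) : 0 ≤ mu q := by
  unfold mu
  split_ifs
  · rcases Nat.eq_zero_or_pos q with rfl | hq
    · simp
    · have : (1 : ℚ) ≤ q := by exact_mod_cast hq
      exact div_nonneg (by positivity) (by linarith)
  · positivity

theorem sum_leeWt_eq_sub_one_mul_mu (q : ℕ) [NeZero q] :
    ((∑ a : ZMod q, leeWt a : ℕ) : ℚ) = (q - 1) * mu q := by
  have h : (4 : ℚ) * (∑ j ∈ range q, min j (q - j) : ℕ) + (q % 2 : ℕ) = (q : ℚ) ^ 2 :=
    mod_cast four_mul_sum_range_min_sub_add_mod_two q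
  rw [sum_leeWt_eq_sum_range_min]
  unfold mu
  split_ifs with hq
  · rw [Nat.even_iff.mp hq] at h
    have hq1 : (q : ℚ) - 1 ≠ 0 := by
      have : q ≠ 1 := by rintro rfl; simp at hq
      exact sub_ne_zero.mpr (by exact_mod_cast this)
    field_simp
    linear_combination h
  · rw [Nat.odd_iff.mp (Nat.not_even_iff_odd.mp hq)] at h
    rw [Nat.cast_one] at h
    linear_combination h / 4

theorem leeWt_zero (q : ℕ) : leeWt (0 : ZMod q) = 0 := by
  simp [leeWt]

section Prime

variable {p : ℕ} [Fact p.Prime]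

theorem sum_leeWt_mul_of_ne_zero {a : ZMod p} (ha : a ≠ 0) :
    ∑ c : ZMod p, leeWt (c * a) = ∑ c : ZMod p, leeWt c :=
  Equiv.sum_comp (Equiv.mulRight₀ a ha) leeWt

theorem sum_leeWtVec_smul {n : ℕ} (x : Fin n → ZMod p) :
    ∑ c : ZMod p, leeWtVec (c • x) = hammingNorm x * ∑ a : ZMod p, leeWt a := by
  have hcoord : ∀ i, ∑ c : ZMod p, leeWt (c * x i) =
      if x i ≠ 0 then ∑ a : ZMod p, leeWt a else 0 := fun i => by
    split_ifs with hxi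
    · exact sum_leeWt_mul_of_ne_zero hxi
    · simp [not_not.mp hxi, leeWt_zero]
  simp only [leeWtVec, Pi.smul_apply, smul_eq_mul]
  rw [sum_comm, sum_congr rfl fun i _ => hcoord i, ← sum_filter, sum_const, smul_eq_mul]
  rfl

theorem exists_smul_leeWtVec_le {n : ℕ} (x : Fin n → ZMod p) :
    ∃ c : ZMod p, c ≠ 0 ∧ (leeWtVec (c • x) : ℚ) ≤ mu p * hammingNorm x := by
  have hsum : ∑ c ∈ univ.erase (0 : ZMod p), (leeWtVec (c • x) : ℚ)
      = ∑ c ∈ univ.erase (0 : ZMod p), mu p * hammingNorm x := by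
    have hzero : (leeWtVec ((0 : ZMod p) • x) : ℚ) = 0 := by simp [leeWtVec, leeWt_zero]
    rw [sum_erase (f := fun c : ZMod p => (leeWtVec (c • x) : ℚ)) _ hzero, ← Nat.cast_sum,
      sum_leeWtVec_smul, Nat.cast_mul, sum_leeWt_eq_sub_one_mul_mu, sum_const,
      card_erase_of_mem (mem_univ _), card_univ, ZMod.card, nsmul_eq_mul,
      Nat.cast_pred (Fact.out : p.Prime).pos]
    ring
  obtain ⟨c, hc, hle⟩ := exists_le_of_sum_le ⟨1, by simp⟩ hsum.le
  exact ⟨c, ne_of_mem_erase hc, hle⟩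

end Prime

theorem minLee_le_leeWtVec {q n : ℕ} {C : Submodule (ZMod q) (Fin n → ZMod q)}
    {x : Fin n → ZMod q} (hx : x ∈ C) (hx0 : x ≠ 0) : minLee C ≤ leeWtVec x :=
  Nat.sInf_le ⟨x, hx, hx0, rfl⟩

theorem minLee_le_mu_mul {p n : ℕ} [Fact p.Prime] (C : Submodule (ZMod p) (Fin n → ZMod p))
    (hC : 2 ≤ finrank (ZMod p) C) :
    (minLee C : ℚ) ≤ mu p *
      ((n - finrank (ZMod p) C + 1 - (n - finrank (ZMod p) C + 1) / (p + 1) : ℕ) : ℚ) := by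
  obtain ⟨x, hxC, hx0, hx⟩ := exists_ne_zero_hammingNorm_le C hC
  obtain ⟨c, hc0, hc⟩ := exists_smul_leeWtVec_le x
  rw [Fintype.card_fin, ZMod.card] at hx
  calc (minLee C : ℚ) ≤ leeWtVec (c • x) := by
        exact_mod_cast minLee_le_leeWtVec (C.smul_mem c hxC) (smul_ne_zero hc0 hx0)
    _ ≤ mu p * hammingNorm x := hc
    _ ≤ _ := mul_le_mul_of_nonneg_left (by exact_mod_cast hx) (mu_nonneg p)

theorem phi_le_mu_floor_bound (p n k : ℕ) (hp : p.Prime) (hk : 2 ≤ k) (hkn : k ≤ n) :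
    (Phi n k p : ℚ) ≤ mu p * ((n : ℚ) - (k : ℚ) + 1 - (((n - k + 1) / (p + 1) : ℕ) : ℚ)) := by
  have : Fact p.Prime := ⟨hp⟩
  set N := n - k + 1
  have hcast : ((N - N / (p + 1) : ℕ) : ℚ) = n - k + 1 - ((N / (p + 1) : ℕ) : ℚ) := by
    rw [Nat.cast_sub (Nat.div_le_self _ _)]
    push_cast [N, Nat.cast_sub hkn]
    ring
  rw [← hcast]
  set B := mu p * ((N - N / (p + 1) : ℕ) : ℚ)
  have hPhi : Phi n k p ≤ ⌊B⌋₊ := by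
    refine csSup_le' fun d ⟨C, hC, hd⟩ => hd ▸ Nat.le_floor ?_
    simpa only [hC] using minLee_le_mu_mul C (hC ▸ hk)
  calc (Phi n k p : ℚ) ≤ ⌊B⌋₊ := by exact_mod_cast hPhi
    _ ≤ B := Nat.floor_le (mul_nonneg (mu_nonneg p) (Nat.cast_nonneg _))
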